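/- Consider the scalar differential equation ċ(t) = k₁(η − c(t))^{1/3} with k₁ > 0 and real cube root. For any initial condition c(0) = s, the solution reaches η in finite time t_c = 3|η − s|^{2/3}/(2k₁) and remains equal to η for all t ≥ t_c (i.e., η is reached in finite time and is forward invariant). -/

import Mathlib

/-! Writing `y = η − c`, the equation becomes `ẏ = −k₁ ∛y`. Since `y ∛y = |y|^{4/3} ≥ 0`, the
square `y²` is nonincreasing, so once `y` vanishes it stays zero. Hence if `y(t_c) ≠ 0`, then `y`
has no zero on `[0, t_c]`, and there `|y|^{2/3}` decreases at the constant rate `2k₁/3`, which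
reaches `|y(t_c)|^{2/3} = 0`: a contradiction. -/

/-- The real (signed) cube root `x ↦ sign(x)·|x|^{1/3}`. -/
noncomputable def realCbrt (x : ℝ) : ℝ :=
  if 0 ≤ x then x ^ ((1 : ℝ) / 3) else -((-x) ^ ((1 : ℝ) / 3))

open Set

lemma mul_realCbrt_self (x : ℝ) : x * realCbrt x = |x| ^ ((4 : ℝ) / 3) := by
  have h : |x| * |x| ^ ((1 : ℝ) / 3) = |x| ^ ((4 : ℝ) / 3) := by
    rw [show (4 : ℝ) / 3 = 1 + 1 / 3 by norm_num, Real.rpow_add' (abs_nonneg x) (by norm_num),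
      Real.rpow_one]
  rcases le_or_gt 0 x with hx | hx
  · rw [realCbrt, if_pos hx, ← h, abs_of_nonneg hx]
  · rw [realCbrt, if_neg hx.not_ge, ← h, abs_of_neg hx]
    ring

section CbrtODE

variable {k : ℝ} {y : ℝ → ℝ} {t : ℝ}

lemma hasDerivAt_sq_of_cbrt_ode (h : HasDerivAt y (-k * realCbrt (y t)) t) :
    HasDerivAt (fun u => y u ^ 2) (-(2 * k) * |y t| ^ ((4 : ℝ) / 3)) t := by
  refine (h.pow 2).congr_deriv ?_
  rw [← mul_realCbrt_self]
  push_cast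
  ring

lemma hasDerivAt_abs_rpow_two_thirds_of_cbrt_ode (h : HasDerivAt y (-k * realCbrt (y t)) t)
    (hy : y t ≠ 0) : HasDerivAt (fun u => |y u| ^ ((2 : ℝ) / 3)) (-(2 * k / 3)) t := by
  have hsq : ∀ x : ℝ, |x| ^ ((2 : ℝ) / 3) = (x ^ 2) ^ ((1 : ℝ) / 3) := fun x => by
    rw [← sq_abs, ← Real.rpow_natCast, ← Real.rpow_mul (abs_nonneg x)]
    norm_num
  simp only [hsq]
  convert (hasDerivAt_sq_of_cbrt_ode h).rpow_const (p := 1 / 3) (Or.inl (pow_ne_zero 2 hy))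
    using 1
  have hpos : 0 < |y t| := abs_pos.2 hy
  have hcancel : |y t| ^ ((4 : ℝ) / 3) * (|y t| ^ 2) ^ ((1 : ℝ) / 3 - 1) = 1 := by
    rw [← Real.rpow_natCast, ← Real.rpow_mul hpos.le, ← Real.rpow_add hpos]
    norm_num
  rw [← sq_abs]
  linear_combination (2 * k / 3) * hcancel

lemma antitoneOn_sq_of_cbrt_ode {a : ℝ} (hk : 0 ≤ k)
    (hode : ∀ t ∈ Ici a, HasDerivAt y (-k * realCbrt (y t)) t) :
    AntitoneOn (fun u => y u ^ 2) (Ici a) := by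
  refine antitoneOn_of_hasDerivWithinAt_nonpos (convex_Ici a)
    (fun t ht => ((hode t ht).continuousAt.pow 2).continuousWithinAt)
    (fun t ht => (hasDerivAt_sq_of_cbrt_ode (hode t (interior_subset ht))).hasDerivWithinAt)
    (fun t _ => ?_)
  have : 0 ≤ |y t| ^ ((4 : ℝ) / 3) := by positivity
  nlinarith

lemma abs_rpow_two_thirds_of_cbrt_ode {a b : ℝ} (hab : a ≤ b)
    (hode : ∀ t ∈ Icc a b, HasDerivAt y (-k * realCbrt (y t)) t)
    (hne : ∀ t ∈ Icc a b, y t ≠ 0) :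
    |y b| ^ ((2 : ℝ) / 3) = |y a| ^ ((2 : ℝ) / 3) - 2 * k / 3 * (b - a) := by
  have hV : ∀ t ∈ Icc a b, HasDerivAt (fun u => |y u| ^ ((2 : ℝ) / 3)) (-(2 * k / 3)) t :=
    fun t ht => hasDerivAt_abs_rpow_two_thirds_of_cbrt_ode (hode t ht) (hne t ht)
  have hL : ∀ t, HasDerivAt (fun u => |y a| ^ ((2 : ℝ) / 3) - 2 * k / 3 * (u - a))
      (-(2 * k / 3)) t := fun t => by
    simpa using ((hasDerivAt_id t).sub_const a).const_mul (2 * k / 3) |>.const_sub _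
  refine eq_of_has_deriv_right_eq
    (fun t ht => (hV t (Ico_subset_Icc_self ht)).hasDerivWithinAt)
    (fun t _ => (hL t).hasDerivWithinAt)
    (fun t ht => (hV t ht).continuousAt.continuousWithinAt)
    (fun t _ => (hL t).continuousAt.continuousWithinAt) (by simp) b ⟨hab, le_rfl⟩

lemma eq_zero_of_cbrt_ode_of_eq_zero {a t₀ t : ℝ} (hk : 0 ≤ k)
    (hode : ∀ t ∈ Ici a, HasDerivAt y (-k * realCbrt (y t)) t)
    (ht₀ : a ≤ t₀) (hzero : y t₀ = 0) (ht : t₀ ≤ t) : y t = 0 := by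
  have hsq : y t ^ 2 ≤ y t₀ ^ 2 := antitoneOn_sq_of_cbrt_ode hk hode ht₀ (ht₀.trans ht) ht
  rw [hzero, zero_pow two_ne_zero] at hsq
  exact pow_eq_zero_iff two_ne_zero |>.1 (le_antisymm hsq (sq_nonneg _))

lemma cbrt_ode_eq_zero_at_settling_time {a : ℝ} (hk : 0 < k)
    (hode : ∀ t ∈ Ici a, HasDerivAt y (-k * realCbrt (y t)) t) :
    y (a + 3 * |y a| ^ ((2 : ℝ) / 3) / (2 * k)) = 0 := by
  set T := a + 3 * |y a| ^ ((2 : ℝ) / 3) / (2 * k)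
  have haT : a ≤ T := le_add_of_nonneg_right (by positivity)
  by_contra hT
  have hne : ∀ t ∈ Icc a T, y t ≠ 0 := fun t ht hzero =>
    hT (eq_zero_of_cbrt_ode_of_eq_zero hk.le hode ht.1 hzero ht.2)
  have hdecay := abs_rpow_two_thirds_of_cbrt_ode haT (fun t ht => hode t ht.1) hne
  have hrate : 2 * k / 3 * (T - a) = |y a| ^ ((2 : ℝ) / 3) := by
    simp only [T]
    field_simp
    ring
  rw [hrate, sub_self, Real.rpow_eq_zero (abs_nonneg _) (by norm_num), abs_eq_zero] at hdecay
  exact hT hdecay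

end CbrtODE

/-- Any solution of `ċ(t) = k₁ (η − c(t))^{1/3}` (real cube root, `k₁ > 0`) with
`c(0) = s` reaches `η` at the finite time `t_c = 3 |η − s|^{2/3} / (2 k₁)` and
remains equal to `η` for all `t ≥ t_c`. -/
theorem finite_time_reach_and_invariance (k₁ η s : ℝ) (hk : 0 < k₁)
    (c : ℝ → ℝ) (hc0 : c 0 = s)
    (hode : ∀ t : ℝ, 0 ≤ t → HasDerivAt c (k₁ * realCbrt (η - c t)) t) :
    let tc : ℝ := 3 * |η - s| ^ ((2 : ℝ) / 3) / (2 * k₁)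
    c tc = η ∧ ∀ t : ℝ, tc ≤ t → c t = η := by
  intro tc
  set y : ℝ → ℝ := fun u => η - c u
  have hy : ∀ t ∈ Ici (0 : ℝ), HasDerivAt y (-k₁ * realCbrt (y t)) t :=
    fun t ht => by simpa only [neg_mul] using (hode t ht).const_sub η
  have hreach : y tc = 0 := by
    simpa only [y, hc0, zero_add] using cbrt_ode_eq_zero_at_settling_time hk hy
  have hstay : ∀ t, tc ≤ t → y t = 0 :=
    fun t => eq_zero_of_cbrt_ode_of_eq_zero hk.le hy (by positivity) hreach
  exact ⟨(sub_eq_zero.1 hreach).symm, fun t ht => (sub_eq_zero.1 (hstay t ht)).symm⟩
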